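/- The space of polynomial vector fields on ℝ² of degree at most r decomposes as the direct sum of K̃(𝒫_{r−1}(ℝ²)) and curl(𝒫_{r+1}(ℝ²)), where K̃(p) = (p x, p y) and curl q = (∂q/∂y, −∂q/∂x). -/

import Mathlib

open MvPolynomial

/-- The linear operator `K̃ : p ↦ (p·x, p·y)` from polynomials in two variables to
polynomial vector fields. -/
noncomputable def KtildeMap :
    MvPolynomial (Fin 2) ℝ →ₗ[ℝ] MvPolynomial (Fin 2) ℝ × MvPolynomial (Fin 2) ℝ :=
  LinearMap.prod (LinearMap.mulRight ℝ (X 0)) (LinearMap.mulRight ℝ (X 1))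

/-- The curl operator `q ↦ (∂q/∂y, −∂q/∂x)`. -/
noncomputable def curlMap :
    MvPolynomial (Fin 2) ℝ →ₗ[ℝ] MvPolynomial (Fin 2) ℝ × MvPolynomial (Fin 2) ℝ :=
  LinearMap.prod
    (pderiv (1 : Fin 2) : Derivation ℝ (MvPolynomial (Fin 2) ℝ) (MvPolynomial (Fin 2) ℝ)).toLinearMap
    (-(pderiv (0 : Fin 2) : Derivation ℝ (MvPolynomial (Fin 2) ℝ) (MvPolynomial (Fin 2) ℝ)).toLinearMap)

namespace Stmt7Aux

abbrev P2 : Type := MvPolynomial (Fin 2) ℝ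

lemma coeff_X_mul_pderiv (i : Fin 2) (f : P2) (m : Fin 2 →₀ ℕ) :
    coeff m (X i * pderiv i f) = (m i : ℝ) * coeff m f := by
  induction f using MvPolynomial.induction_on' with
  | add p q hp hq =>
    simp only [map_add, mul_add, coeff_add, hp, hq]
  | monomial s a =>
    rw [pderiv_monomial, X, monomial_mul, one_mul]
    by_cases h : s i = 0
    · have hz : a * ((s i : ℕ) : ℝ) = 0 := by simp [h]
      rw [hz, monomial_zero, coeff_zero, coeff_monomial]
      split
      · next heq => subst heq; simp [h]
      · simp
    · have hs : Finsupp.single i 1 + (s - Finsupp.single i 1) = s := by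
        ext j
        by_cases hj : j = i
        · subst hj
          simp only [Finsupp.add_apply, Finsupp.tsub_apply, Finsupp.single_eq_same]
          omega
        · simp [Finsupp.single_apply, Ne.symm hj, hj]
      rw [hs, coeff_monomial, coeff_monomial]
      split
      · next heq => subst heq; ring
      · ring

lemma weight_one_eq (m : Fin 2 →₀ ℕ) :
    (Finsupp.weight (1 : Fin 2 → ℕ)) m = m 0 + m 1 := by
  rw [show (1 : Fin 2 → ℕ) = fun _ => 1 from rfl, ← Finsupp.degree_eq_weight_one, Finsupp.degree]
  show ∑ i ∈ m.support, m i = m 0 + m 1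
  rw [Finset.sum_subset (Finset.subset_univ _) (by intro i _ h; simpa using h)]
  exact Fin.sum_univ_two m

lemma euler_coeff (f : P2) (m : Fin 2 →₀ ℕ) :
    coeff m (X 0 * pderiv 0 f + X 1 * pderiv 1 f) = ((m 0 + m 1 : ℕ) : ℝ) * coeff m f := by
  rw [coeff_add, coeff_X_mul_pderiv, coeff_X_mul_pderiv]
  push_cast
  ring

lemma euler_homogeneous {f : P2} {d : ℕ} (hf : f.IsHomogeneous d) :
    X 0 * pderiv 0 f + X 1 * pderiv 1 f = (d : ℝ) • f := by
  ext m
  rw [euler_coeff, coeff_smul, smul_eq_mul]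
  by_cases h : coeff m f = 0
  · simp [h]
  · have hd : m 0 + m 1 = d := by
      have := hf h
      rwa [weight_one_eq] at this
    rw [hd]

lemma euler_zero {q : P2} (h : X 0 * pderiv 0 q + X 1 * pderiv 1 q = 0) :
    pderiv (0 : Fin 2) q = 0 ∧ pderiv (1 : Fin 2) q = 0 := by
  have hc : ∀ m : Fin 2 →₀ ℕ, m ≠ 0 → coeff m q = 0 := by
    intro m hm
    have h2 := congrArg (coeff m) h
    rw [euler_coeff, coeff_zero] at h2
    have hne : m 0 + m 1 ≠ 0 := by
      intro h0
      apply hm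
      ext j
      fin_cases j <;> simp <;> omega
    have : ((m 0 + m 1 : ℕ) : ℝ) ≠ 0 := Nat.cast_ne_zero.mpr hne
    exact (mul_eq_zero.mp h2).resolve_left this
  have hq : q = C (coeff 0 q) := by
    ext m
    rw [coeff_C]
    split
    · next heq => subst heq; rfl
    · next heq => exact hc m (Ne.symm heq)
  rw [hq]
  simp

lemma fin2_sum (s : Fin 2 →₀ ℕ) : (s.sum fun _ e => e) = s 0 + s 1 := by
  rw [Finsupp.sum, Finset.sum_subset (Finset.subset_univ _) (by intro i _ h; simpa using h)]
  exact Fin.sum_univ_two s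

lemma totalDegree_pderiv_le (i : Fin 2) (f : P2) (n : ℕ) (hf : f.totalDegree ≤ n + 1) :
    (pderiv i f).totalDegree ≤ n := by
  conv_lhs => rw [f.as_sum]
  rw [map_sum]
  refine (totalDegree_finset_sum _ _).trans (Finset.sup_le fun s hs => ?_)
  rw [pderiv_monomial]
  by_cases h : s i = 0
  · have : coeff s f * ((s i : ℕ) : ℝ) = 0 := by simp [h]
    rw [this, monomial_zero]
    simp
  · refine (totalDegree_monomial_le _ _).trans ?_
    have hds : (s.sum fun _ e => e) ≤ n + 1 :=
      le_trans (Finset.le_sup (f := fun m => m.sum fun _ e => e) hs) hf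
    refine le_trans (le_of_eq (fin2_sum _)) ?_
    rw [fin2_sum] at hds
    simp only [Finsupp.tsub_apply, Finsupp.single_apply]
    fin_cases i <;> simp_all <;> omega

lemma key1 {d : ℕ} {a b : P2} (ha : a.IsHomogeneous d) :
    (pderiv 0 a + pderiv 1 b) * X 0 + pderiv 1 (X 1 * a - X 0 * b)
      = C (d : ℝ) * a + a := by
  have h01 : pderiv (1 : Fin 2) (X 0 : P2) = 0 := pderiv_X_of_ne (by decide)
  have e : X 0 * pderiv 0 a + X 1 * pderiv 1 a = C (d : ℝ) * a := by
    rw [← smul_eq_C_mul]; exact euler_homogeneous ha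
  rw [map_sub, pderiv_mul, pderiv_mul, pderiv_X_self, h01]
  linear_combination e

lemma key2 {d : ℕ} {a b : P2} (hb : b.IsHomogeneous d) :
    (pderiv 0 a + pderiv 1 b) * X 1 - pderiv 0 (X 1 * a - X 0 * b)
      = C (d : ℝ) * b + b := by
  have h10 : pderiv (0 : Fin 2) (X 1 : P2) = 0 := pderiv_X_of_ne (by decide)
  have e : X 0 * pderiv 0 b + X 1 * pderiv 1 b = C (d : ℝ) * b := by
    rw [← smul_eq_C_mul]; exact euler_homogeneous hb
  rw [map_sub, pderiv_mul, pderiv_mul, pderiv_X_self, h10]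
  linear_combination e

lemma sum_hc {r : ℕ} {w : P2} (hw : w.totalDegree ≤ r) :
    ∑ d ∈ Finset.range (r + 1), homogeneousComponent d w = w := by
  have h1 : Finset.range (w.totalDegree + 1) ⊆ Finset.range (r + 1) :=
    Finset.range_subset_range.mpr (by omega)
  calc ∑ d ∈ Finset.range (r + 1), homogeneousComponent d w
      = ∑ d ∈ Finset.range (w.totalDegree + 1), homogeneousComponent d w := by
        refine (Finset.sum_subset h1 fun d _ hd => ?_).symm
        rw [Finset.mem_range, not_lt] at hd
        apply homogeneousComponent_eq_zero
        omega
    _ = w := sum_homogeneousComponent w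

lemma smul_cancel {d : ℕ} (a : P2) :
    ((d : ℝ) + 1)⁻¹ • (C (d : ℝ) * a + a) = a := by
  have : C (d : ℝ) * a + a = ((d : ℝ) + 1) • a := by
    rw [smul_eq_C_mul, map_add, C_1, add_mul, one_mul]
  rw [this, smul_smul, inv_mul_cancel₀ (by positivity), one_smul]

lemma decompose (r : ℕ) (hr : 1 ≤ r) (u v : P2) (hu : u.totalDegree ≤ r)
    (hv : v.totalDegree ≤ r) :
    ∃ p q : P2, p.totalDegree ≤ r - 1 ∧ q.totalDegree ≤ r + 1 ∧
      p * X 0 + pderiv 1 q = u ∧ p * X 1 - pderiv 0 q = v := by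
  refine ⟨∑ d ∈ Finset.range (r + 1), ((d : ℝ) + 1)⁻¹ • (pderiv 0 (homogeneousComponent d u) + pderiv 1 (homogeneousComponent d v)),
      ∑ d ∈ Finset.range (r + 1), ((d : ℝ) + 1)⁻¹ • (X 1 * homogeneousComponent d u - X 0 * homogeneousComponent d v), ?_, ?_, ?_, ?_⟩
  · refine (totalDegree_finset_sum _ _).trans (Finset.sup_le fun d hd => ?_)
    refine (totalDegree_smul_le _ _).trans ?_
    refine (totalDegree_add _ _).trans (max_le ?_ ?_) <;>
    · refine totalDegree_pderiv_le _ _ _ ?_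
      refine le_trans (IsHomogeneous.totalDegree_le (homogeneousComponent_isHomogeneous d _)) ?_
      rw [Finset.mem_range] at hd
      omega
  · refine (totalDegree_finset_sum _ _).trans (Finset.sup_le fun d hd => ?_)
    refine (totalDegree_smul_le _ _).trans ?_
    rw [sub_eq_add_neg]
    refine (totalDegree_add _ _).trans (max_le ?_ ?_)
    · refine (totalDegree_mul _ _).trans ?_
      have := IsHomogeneous.totalDegree_le (homogeneousComponent_isHomogeneous d u)
      have h1 : (X (1 : Fin 2) : P2).totalDegree ≤ 1 := le_of_eq (totalDegree_X _)
      rw [Finset.mem_range] at hd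
      omega
    · rw [totalDegree_neg]
      refine (totalDegree_mul _ _).trans ?_
      have := IsHomogeneous.totalDegree_le (homogeneousComponent_isHomogeneous d v)
      have h1 : (X (0 : Fin 2) : P2).totalDegree ≤ 1 := le_of_eq (totalDegree_X _)
      rw [Finset.mem_range] at hd
      omega
  · have hterm : ∀ d ∈ Finset.range (r + 1),
        (((d : ℝ) + 1)⁻¹ • (pderiv 0 (homogeneousComponent d u) + pderiv 1 (homogeneousComponent d v))) * X 0 +
          pderiv 1 (((d : ℝ) + 1)⁻¹ • (X 1 * homogeneousComponent d u - X 0 * homogeneousComponent d v)) = homogeneousComponent d u := by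
      intro d _
      rw [smul_mul_assoc, Derivation.map_smul, ← smul_add,
        key1 (homogeneousComponent_isHomogeneous d u), smul_cancel]
    rw [Finset.sum_mul, map_sum, ← Finset.sum_add_distrib, Finset.sum_congr rfl hterm]
    exact sum_hc hu
  · have hterm : ∀ d ∈ Finset.range (r + 1),
        (((d : ℝ) + 1)⁻¹ • (pderiv 0 (homogeneousComponent d u) + pderiv 1 (homogeneousComponent d v))) * X 1 -
          pderiv 0 (((d : ℝ) + 1)⁻¹ • (X 1 * homogeneousComponent d u - X 0 * homogeneousComponent d v)) = homogeneousComponent d v := by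
      intro d _
      rw [smul_mul_assoc, Derivation.map_smul, ← smul_sub,
        key2 (homogeneousComponent_isHomogeneous d v), smul_cancel]
    rw [Finset.sum_mul, map_sum, ← Finset.sum_sub_distrib, Finset.sum_congr rfl hterm]
    exact sum_hc hv

end Stmt7Aux

open Stmt7Aux in
/-- `𝒫_r(Tℝ²) = K̃(𝒫_{r−1}(ℝ²)) ⊕ curl(𝒫_{r+1}(ℝ²))`: the two images are disjoint
and together span the polynomial vector fields of degree at most `r`. -/
theorem stmt_7 (r : ℕ) (hr : 1 ≤ r) :
    Disjoint (Submodule.map KtildeMap (MvPolynomial.restrictTotalDegree (Fin 2) ℝ (r - 1)))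
      (Submodule.map curlMap (MvPolynomial.restrictTotalDegree (Fin 2) ℝ (r + 1))) ∧
    Submodule.map KtildeMap (MvPolynomial.restrictTotalDegree (Fin 2) ℝ (r - 1)) ⊔
        Submodule.map curlMap (MvPolynomial.restrictTotalDegree (Fin 2) ℝ (r + 1)) =
      (MvPolynomial.restrictTotalDegree (Fin 2) ℝ r).prod
        (MvPolynomial.restrictTotalDegree (Fin 2) ℝ r) := by
  constructor
  · rw [Submodule.disjoint_def]
    rintro ⟨a, b⟩ ⟨p, hp, hKp⟩ ⟨q, hq, hCq⟩
    simp only [KtildeMap, curlMap, LinearMap.prod_apply, Function.prod, LinearMap.mulRight_apply,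
      LinearMap.neg_apply, Derivation.coeFn_coe, Prod.mk.injEq] at hKp hCq
    obtain ⟨hKa, hKb⟩ := hKp
    obtain ⟨hCa, hCb⟩ := hCq
    have h0 : X 0 * pderiv 0 q + X 1 * pderiv 1 q = 0 := by
      have h1 : pderiv (1 : Fin 2) q = p * X 0 := by rw [hCa, hKa]
      have h2 : pderiv (0 : Fin 2) q = -(p * X 1) := by
        linear_combination hKb - hCb
      rw [h1, h2]; ring
    obtain ⟨hz0, hz1⟩ := euler_zero h0
    have ha : a = 0 := by rw [← hCa, hz1]
    have hb : b = 0 := by rw [← hCb, hz0, neg_zero]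
    simp [ha, hb]
  · apply le_antisymm
    · apply sup_le
      · rintro ⟨a, b⟩ ⟨p, hp, hpe⟩
        replace hp : totalDegree p ≤ r - 1 := (MvPolynomial.mem_restrictTotalDegree _ _ _).mp hp
        simp only [KtildeMap, LinearMap.prod_apply, Function.prod, LinearMap.mulRight_apply,
          Prod.mk.injEq] at hpe
        obtain ⟨ha, hb⟩ := hpe
        rw [Submodule.mem_prod]
        constructor <;> rw [MvPolynomial.mem_restrictTotalDegree]
        · rw [← ha]
          refine (totalDegree_mul _ _).trans ?_
          have := totalDegree_X (R := ℝ) (0 : Fin 2)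
          omega
        · rw [← hb]
          refine (totalDegree_mul _ _).trans ?_
          have := totalDegree_X (R := ℝ) (1 : Fin 2)
          omega
      · rintro ⟨a, b⟩ ⟨q, hq, hqe⟩
        replace hq : totalDegree q ≤ r + 1 := (MvPolynomial.mem_restrictTotalDegree _ _ _).mp hq
        simp only [curlMap, LinearMap.prod_apply, Function.prod, LinearMap.neg_apply,
          Derivation.coeFn_coe, Prod.mk.injEq] at hqe
        obtain ⟨ha, hb⟩ := hqe
        rw [Submodule.mem_prod]
        constructor <;> rw [MvPolynomial.mem_restrictTotalDegree]
        · rw [← ha]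
          exact totalDegree_pderiv_le _ _ _ hq
        · rw [← hb, totalDegree_neg]
          exact totalDegree_pderiv_le _ _ _ hq
    · rintro ⟨u, v⟩ hmem
      rw [Submodule.mem_prod] at hmem
      obtain ⟨hu, hv⟩ := hmem
      replace hu : totalDegree u ≤ r := (MvPolynomial.mem_restrictTotalDegree _ _ _).mp hu
      replace hv : totalDegree v ≤ r := (MvPolynomial.mem_restrictTotalDegree _ _ _).mp hv
      obtain ⟨p, q, hpd, hqd, h1, h2⟩ := decompose r hr u v hu hv
      rw [Submodule.mem_sup]
      refine ⟨KtildeMap p, ⟨p, (MvPolynomial.mem_restrictTotalDegree _ _ _).mpr hpd, rfl⟩,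
        curlMap q, ⟨q, (MvPolynomial.mem_restrictTotalDegree _ _ _).mpr hqd, rfl⟩, ?_⟩
      simp only [KtildeMap, curlMap, LinearMap.prod_apply, Function.prod, LinearMap.mulRight_apply,
        LinearMap.neg_apply, Derivation.coeFn_coe, Prod.mk_add_mk, Prod.mk.injEq]
      constructor
      · exact h1
      · rw [← h2]; ring
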